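/- For every integer m ≥ 2, (∑_{k=1}^{2m-1} (-1)^{k-1} F_k^3)·F_{2m-1}^3 + (∑_{k=2}^{2m-2} F_k^3)·F_{2m}^3 = (F_{2m-1}^3 - 1)(F_{2m}^3 - 1)/2, where the division by 2 is exact. -/
import Mathlib

open Finset

private lemma fibZ (p q r : ℕ) (h1 : p = r + 2) (h2 : q = r + 1) :
    (Nat.fib p : ℤ) = (Nat.fib r : ℤ) + (Nat.fib q : ℤ) := by
  subst h1 h2; rw [Nat.fib_add_two]; push_cast; ring

private lemma cassini (n : ℕ) :
    (Nat.fib (2*n+1) : ℤ)^2 + (Nat.fib (2*n+1) : ℤ) * (Nat.fib (2*n+2) : ℤ)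
      - (Nat.fib (2*n+2) : ℤ)^2 = 1 := by
  induction n with
  | zero => norm_num
  | succ n ih =>
    have ha := fibZ (2*n+3) (2*n+2) (2*n+1) (by ring) (by ring)
    have hb := fibZ (2*n+4) (2*n+3) (2*n+2) (by ring) (by ring)
    simp only [show 2*(n+1)+1 = 2*n+3 from by ring, show 2*(n+1)+2 = 2*n+4 from by ring]
    rw [hb, ha]
    linear_combination ih

private lemma lemA (n : ℕ) :
    2 * ∑ k ∈ Finset.Icc 1 (2*n+1), (-1:ℤ)^(k-1) * (Nat.fib k : ℤ)^3
      = (Nat.fib (2*n+1) : ℤ)^2 * (Nat.fib (2*n+2) : ℤ)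
        + (Nat.fib (2*n+1) : ℤ) + (Nat.fib (2*n+2) : ℤ) - 1 := by
  induction n with
  | zero => simp
  | succ n ih =>
    have h1 : 2*(n+1)+1 = (2*n+2)+1 := by ring
    have h2 : 2*n+2 = (2*n+1)+1 := by ring
    rw [h1, Finset.sum_Icc_succ_top (by omega), h2, Finset.sum_Icc_succ_top (by omega)]
    simp only [show 2*n+1+1-1 = 2*n+1 from by omega, show 2*n+1+1+1-1 = 2*n+2 from by omega,
      show 2*n+1+1 = 2*n+2 from by ring, show 2*n+1+1+1 = 2*n+3 from by ring,
      show 2*(n+1)+1 = 2*n+3 from by ring, show 2*(n+1)+2 = 2*n+4 from by ring]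
    rw [Odd.neg_one_pow ⟨n, by ring⟩, Even.neg_one_pow ⟨n+1, by ring⟩]
    have ha := fibZ (2*n+3) (2*n+2) (2*n+1) (by ring) (by ring)
    have hb := fibZ (2*n+4) (2*n+3) (2*n+2) (by ring) (by ring)
    rw [hb, ha]
    have hc := cassini n
    set a := (Nat.fib (2*n+1) : ℤ)
    set b := (Nat.fib (2*n+2) : ℤ)
    linear_combination ih + (a + 2*b) * hc

private lemma lemB (n : ℕ) :
    2 * ∑ k ∈ Finset.Icc 2 (2*n+2), (Nat.fib k : ℤ)^3
      = (Nat.fib (2*n+3) : ℤ)^2 * (Nat.fib (2*n+4) : ℤ) - (Nat.fib (2*n+3) : ℤ)^3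
        + (Nat.fib (2*n+4) : ℤ) - 2 * (Nat.fib (2*n+3) : ℤ) - 1 := by
  induction n with
  | zero =>
    norm_num [Finset.Icc_self]
  | succ n ih =>
    have h1 : 2*(n+1)+2 = (2*n+3)+1 := by ring
    have h2 : 2*n+3 = (2*n+2)+1 := by ring
    rw [h1, Finset.sum_Icc_succ_top (by omega), h2, Finset.sum_Icc_succ_top (by omega)]
    simp only [show 2*n+2+1 = 2*n+3 from by ring, show 2*n+2+1+1 = 2*n+4 from by ring,
      show 2*(n+1)+3 = 2*n+5 from by ring, show 2*(n+1)+4 = 2*n+6 from by ring]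
    have ha := fibZ (2*n+3) (2*n+2) (2*n+1) (by ring) (by ring)
    have hb := fibZ (2*n+4) (2*n+3) (2*n+2) (by ring) (by ring)
    have hd := fibZ (2*n+5) (2*n+4) (2*n+3) (by ring) (by ring)
    have he := fibZ (2*n+6) (2*n+5) (2*n+4) (by ring) (by ring)
    rw [he, hd, hb, ha]
    rw [hb, ha] at ih
    have hc := cassini n
    set a := (Nat.fib (2*n+1) : ℤ)
    set b := (Nat.fib (2*n+2) : ℤ)
    linear_combination ih + (-b) * hc

theorem stmt4 (m : ℕ) (hm : 2 ≤ m) :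
    2 * ((∑ k ∈ Finset.Icc 1 (2*m-1), (-1:ℤ)^(k-1) * (Nat.fib k : ℤ)^3) * (Nat.fib (2*m-1) : ℤ)^3
      + (∑ k ∈ Finset.Icc 2 (2*m-2), (Nat.fib k : ℤ)^3) * (Nat.fib (2*m) : ℤ)^3)
    = ((Nat.fib (2*m-1) : ℤ)^3 - 1) * ((Nat.fib (2*m) : ℤ)^3 - 1) := by
  obtain ⟨n, rfl⟩ : ∃ n, m = n + 2 := ⟨m - 2, by omega⟩
  have h1 : 2*(n+2)-1 = 2*n+3 := by omega
  have h2 : 2*(n+2)-2 = 2*n+2 := by omega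
  have h3 : 2*(n+2) = 2*n+4 := by omega
  rw [h1, h2, h3]
  have hA := lemA (n+1)
  have hB := lemB n
  have hc := cassini (n+1)
  simp only [show 2*(n+1)+1 = 2*n+3 from by ring, show 2*(n+1)+2 = 2*n+4 from by ring]
    at hA hc
  set a := (Nat.fib (2*n+3) : ℤ)
  set b := (Nat.fib (2*n+4) : ℤ)
  linear_combination a^3 * hA + b^3 * hB
    + (1 - b^2 + a*b + a^2 - a^2*b^2 + a^3*b) * hc
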